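/- Every endpoint rule f^{p,q} satisfies out-between-ness: for every profile S, agent i, and alternative interval S'_i, f^{p,q}(S) lies between S_i and f^{p,q}(S'_i, S_{-i}) in the interval betweenness relation. Consequently, endpoint rules are strategyproof with respect to generalized single-peaked preferences. -/

import Mathlib

/-- A bounded open nonempty interval of ℝ, given by endpoints `lo < hi`. -/
structure OInt where
  lo : ℝ
  hi : ℝ
  lt : lo < hi

/-- The set of points of the interval. -/
def OInt.toSet (I : OInt) : Set ℝ := Set.Ioo I.lo I.hi

/-- Number of agents whose interval contains a point ≤ x, i.e. |{i : (-∞,x] ∩ S_i ≠ ∅}|. -/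
noncomputable def lowCount {n : ℕ} (S : Fin n → OInt) (x : ℝ) : ℕ :=
  (Finset.univ.filter fun i => (S i).lo < x).card

/-- Number of agents whose interval contains a point ≥ x, i.e. |{i : [x,∞) ∩ S_i ≠ ∅}|. -/
noncomputable def highCount {n : ℕ} (S : Fin n → OInt) (x : ℝ) : ℕ :=
  (Finset.univ.filter fun i => x < (S i).hi).card

/-- The endpoint rule f^{p,q}, as a set:
    {x : |{i : (-∞,x] ∩ S_i ≠ ∅}| ≥ p and |{i : [x,∞) ∩ S_i ≠ ∅}| ≥ q}. -/
def eprSet {n : ℕ} (p q : ℕ) (S : Fin n → OInt) : Set ℝ :=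
  {x | p ≤ lowCount S x ∧ q ≤ highCount S x}

/-- The k-th smallest (1-indexed) value of a finite family of reals. -/
noncomputable def kthSmall {n : ℕ} (a : Fin n → ℝ) (k : ℕ) : ℝ :=
  (List.insertionSort (· ≤ ·) (List.ofFn a)).getD (k - 1) 0

/-- The k-th largest (1-indexed) value of a finite family of reals. -/
noncomputable def kthLarge {n : ℕ} (a : Fin n → ℝ) (k : ℕ) : ℝ :=
  (List.insertionSort (· ≤ ·) (List.ofFn a)).getD (n - k) 0

/-- z is weakly between x and y. -/
def Btw3 (x z y : ℝ) : Prop := (x ≤ z ∧ z ≤ y) ∨ (y ≤ z ∧ z ≤ x)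

/-- Interval betweenness: `IB R S T` means S ∈ B(R,T), i.e. inf S is weakly between
inf R and inf T, and sup S is weakly between sup R and sup T. -/
def IB (R S T : OInt) : Prop := Btw3 R.lo S.lo T.lo ∧ Btw3 R.hi S.hi T.hi

/-- A generalized single-peaked preference with peak `peak`: the peak is the unique
maximal element, and an interval between the peak and a third interval is preferred
to the third interval. -/
def SinglePeaked (pref : OInt → OInt → Prop) (peak : OInt) : Prop :=
  (∀ T, pref T peak → T = peak) ∧
  (∀ R T, IB peak R T → pref peak R ∧ pref R T)

/-- Strategyproofness: reporting one's peak is always weakly preferred. -/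
def Strategyproof {n : ℕ} (f : (Fin n → OInt) → OInt) : Prop :=
  ∀ (S : Fin n → OInt) (i : Fin n) (pref : OInt → OInt → Prop) (peak : OInt),
    SinglePeaked pref peak → pref (f (Function.update S i peak)) (f S)

/-- Out-between-ness: f(S) lies between S_i and f(S'_i, S_{-i}). -/
def OutBetween {n : ℕ} (f : (Fin n → OInt) → OInt) : Prop :=
  ∀ (S : Fin n → OInt) (i : Fin n) (S' : OInt), IB (S i) (f S) (f (Function.update S i S'))

/-- Lower endpoint of the endpoint rule: the p-th smallest lower endpoint. -/
noncomputable def eprLo {n : ℕ} (p : ℕ) (S : Fin n → OInt) : ℝ :=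
  kthSmall (fun i => (S i).lo) p

/-- Upper endpoint of the endpoint rule: the q-th largest upper endpoint. -/
noncomputable def eprHi {n : ℕ} (q : ℕ) (S : Fin n → OInt) : ℝ :=
  kthLarge (fun i => (S i).hi) q

/-- The endpoint rule f^{p,q} as an interval-valued rule (well-defined when
1 ≤ p, 1 ≤ q, and p + q ≤ n + 1, in which case the junk value is never used). -/
noncomputable def eprI {n : ℕ} (p q : ℕ) (S : Fin n → OInt) : OInt :=
  if h : eprLo p S < eprHi q S then ⟨eprLo p S, eprHi q S, h⟩ else ⟨0, 1, one_pos⟩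

/-!
The `k`-th smallest value `m` of a family `v` is characterised by counting: fewer than `k`
values lie strictly below `m`, and at least `k` lie at or below it. If `v i < m`, moving `v i`
anywhere cannot add a value below `m`, so the new `k`-th smallest value is still `≥ m`;
symmetrically when `v i > m`. Applied to the lower and upper endpoints, this is out-betweenness
of `f^{p,q}`. For strategyproofness, apply out-betweenness at the truthful profile, with the
agent deviating to `S i`: the truthful outcome lies between the peak and `f(S)`, so a
single-peaked preference ranks it weakly above `f(S)`.
-/

open Finset

theorem Fin.card_filter_univ_eq_countP_ofFn {α : Type*} {n : ℕ} (v : Fin n → α) (P : α → Prop)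
    [DecidablePred P] : #{i | P (v i)} = (List.ofFn v).countP P := by
  rw [← Multiset.coe_countP, ← Fin.univ_val_map, Multiset.countP_map]
  rfl

namespace List.Pairwise

variable {α : Type*} [LinearOrder α]

theorem countP_lt_getElem_le {l : List α} (hl : l.Pairwise (· ≤ ·)) (j : ℕ) (hj : j < l.length) :
    l.countP (· < l[j]) ≤ j := by
  induction l generalizing j with
  | nil => simp at hj
  | cons a l ih =>
    obtain ⟨ha, hl⟩ := List.pairwise_cons.mp hl
    cases j with
    | zero => simpa [List.countP_eq_zero] using ha
    | succ j =>
      have := ih hl j (by simpa using hj)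
      simp only [List.getElem_cons_succ, List.countP_cons]
      split <;> omega

theorem lt_countP_le_getElem {l : List α} (hl : l.Pairwise (· ≤ ·)) (j : ℕ) (hj : j < l.length) :
    j < l.countP (· ≤ l[j]) := by
  induction l generalizing j with
  | nil => simp at hj
  | cons a l ih =>
    obtain ⟨ha, hl⟩ := List.pairwise_cons.mp hl
    cases j with
    | zero => simp
    | succ j =>
      have := ih hl j (by simpa using hj)
      rw [List.getElem_cons_succ,
        List.countP_cons_of_pos (by simpa using ha _ (List.getElem_mem _))]
      omega

end List.Pairwise

section kthSmall

variable {n : ℕ} (v : Fin n → ℝ) {k : ℕ}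

theorem card_filter_univ_eq_countP_insertionSort (P : ℝ → Prop) [DecidablePred P] :
    #{i | P (v i)} = (List.ofFn v |>.insertionSort (· ≤ ·)).countP P := by
  rw [Fin.card_filter_univ_eq_countP_ofFn, (List.perm_insertionSort _ _).countP_eq]

theorem kthSmall_eq_getElem (hk : 1 ≤ k) (hkn : k ≤ n) :
    ∃ h, kthSmall v k = (List.ofFn v |>.insertionSort (· ≤ ·))[k - 1]'h :=
  ⟨by simp; omega, List.getD_eq_getElem _ _ _⟩

variable {v}

theorem card_filter_lt_kthSmall (hk : 1 ≤ k) (hkn : k ≤ n) : #{i | v i < kthSmall v k} < k := by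
  obtain ⟨h, hv⟩ := kthSmall_eq_getElem v hk hkn
  have := (List.pairwise_insertionSort (· ≤ ·) (List.ofFn v)).countP_lt_getElem_le _ h
  rw [card_filter_univ_eq_countP_insertionSort v (· < kthSmall v k), hv]
  omega

theorem le_card_filter_le_kthSmall (hk : 1 ≤ k) (hkn : k ≤ n) :
    k ≤ #{i | v i ≤ kthSmall v k} := by
  obtain ⟨h, hv⟩ := kthSmall_eq_getElem v hk hkn
  have := (List.pairwise_insertionSort (· ≤ ·) (List.ofFn v)).lt_countP_le_getElem _ h
  rw [card_filter_univ_eq_countP_insertionSort v (· ≤ kthSmall v k), hv]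
  omega

theorem kthSmall_lt_of_le_card (hk : 1 ≤ k) (hkn : k ≤ n) {x : ℝ} (h : k ≤ #{i | v i < x}) :
    kthSmall v k < x := by
  by_contra! hx
  have : #{i | v i < x} ≤ #{i | v i < kthSmall v k} :=
    card_le_card fun i => by simpa using fun hi => hi.trans_le hx
  have := card_filter_lt_kthSmall (v := v) hk hkn
  omega

theorem kthSmall_le_of_le_card (hk : 1 ≤ k) (hkn : k ≤ n) {x : ℝ} (h : k ≤ #{i | v i ≤ x}) :
    kthSmall v k ≤ x := by
  by_contra! hx
  have : #{i | v i ≤ x} ≤ #{i | v i < kthSmall v k} :=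
    card_le_card fun i => by simpa using fun hi => hi.trans_lt hx
  have := card_filter_lt_kthSmall (v := v) hk hkn
  omega

theorem le_kthSmall_of_card_lt (hk : 1 ≤ k) (hkn : k ≤ n) {x : ℝ} (h : #{i | v i < x} < k) :
    x ≤ kthSmall v k := by
  by_contra! hx
  have : #{i | v i ≤ kthSmall v k} ≤ #{i | v i < x} :=
    card_le_card fun i => by simpa using fun hi => hi.trans_lt hx
  have := le_card_filter_le_kthSmall (v := v) hk hkn
  omega

theorem btw3_kthSmall_update (hk : 1 ≤ k) (hkn : k ≤ n) (i : Fin n) (b : ℝ) :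
    Btw3 (v i) (kthSmall v k) (kthSmall (Function.update v i b) k) := by
  rcases lt_trichotomy (v i) (kthSmall v k) with hlt | heq | hgt
  · refine .inl ⟨hlt.le, le_kthSmall_of_card_lt hk hkn ?_⟩
    refine (card_le_card fun j => ?_).trans_lt (card_filter_lt_kthSmall (v := v) hk hkn)
    rcases eq_or_ne j i with rfl | hj <;> simp_all
  · rcases le_total (kthSmall v k) (kthSmall (Function.update v i b) k) with h | h
    exacts [.inl ⟨heq.le, h⟩, .inr ⟨h, heq.ge⟩]
  · refine .inr ⟨kthSmall_le_of_le_card hk hkn ?_, hgt.le⟩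
    refine (le_card_filter_le_kthSmall (v := v) hk hkn).trans (card_le_card fun j => ?_)
    rcases eq_or_ne j i with rfl | hj <;> simp_all

theorem kthLarge_eq_kthSmall (k : ℕ) : kthLarge v k = kthSmall v (n + 1 - k) := by
  unfold kthLarge kthSmall
  congr 1
  omega

end kthSmall

section EndpointRule

variable {n p q : ℕ}

theorem btw3_eprLo_update (hp : 1 ≤ p) (hpn : p ≤ n) (S : Fin n → OInt) (i : Fin n) (S' : OInt) :
    Btw3 (S i).lo (eprLo p S) (eprLo p (Function.update S i S')) := by
  have := btw3_kthSmall_update (v := OInt.lo ∘ S) hp hpn i S'.lo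
  rwa [← Function.comp_update] at this

theorem btw3_eprHi_update (hq : 1 ≤ q) (hqn : q ≤ n) (S : Fin n → OInt) (i : Fin n) (S' : OInt) :
    Btw3 (S i).hi (eprHi q S) (eprHi q (Function.update S i S')) := by
  have := btw3_kthSmall_update (v := OInt.hi ∘ S) (k := n + 1 - q) (by omega) (by omega) i S'.hi
  rwa [← Function.comp_update, ← kthLarge_eq_kthSmall, ← kthLarge_eq_kthSmall] at this

theorem eprLo_lt_eprHi (hp : 1 ≤ p) (hq : 1 ≤ q) (hpq : p + q ≤ n + 1) (S : Fin n → OInt) :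
    eprLo p S < eprHi q S := by
  rw [eprLo, eprHi, kthLarge_eq_kthSmall]
  apply kthSmall_lt_of_le_card hp (by omega)
  calc p ≤ n + 1 - q := by omega
    _ ≤ #{j | (S j).hi ≤ kthSmall (fun j => (S j).hi) (n + 1 - q)} :=
      le_card_filter_le_kthSmall (by omega) (by omega)
    _ ≤ _ := card_le_card fun j => by simpa using fun hj => (S j).lt.trans_le hj

theorem eprI_eq (hp : 1 ≤ p) (hq : 1 ≤ q) (hpq : p + q ≤ n + 1) (S : Fin n → OInt) :
    eprI p q S = ⟨eprLo p S, eprHi q S, eprLo_lt_eprHi hp hq hpq S⟩ :=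
  dif_pos _

theorem outBetween_eprI (hp : 1 ≤ p) (hq : 1 ≤ q) (hpq : p + q ≤ n + 1) :
    OutBetween (eprI (n := n) p q) := by
  intro S i S'
  rw [eprI_eq hp hq hpq, eprI_eq hp hq hpq]
  exact ⟨btw3_eprLo_update hp (by omega) S i S', btw3_eprHi_update hq (by omega) S i S'⟩

end EndpointRule

theorem OutBetween.strategyproof {n : ℕ} {f : (Fin n → OInt) → OInt} (hf : OutBetween f) :
    Strategyproof f := by
  intro S i pref peak hpeak
  have := hf (Function.update S i peak) i (S i)
  rw [Function.update_self, Function.update_idem, Function.update_eq_self] at this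
  exact (hpeak.2 _ _ this).2

/-- endpoint rules satisfy out-between-ness, and hence are strategyproof
with respect to generalized single-peaked preferences. -/
theorem endpoint_rule_outBetween_and_strategyproof (n p q : ℕ) (hp : 1 ≤ p) (hq : 1 ≤ q)
    (hpq : p + q ≤ n + 1) :
    (∀ (S : Fin n → OInt) (i : Fin n) (S' : OInt),
        Btw3 (S i).lo (eprLo p S) (eprLo p (Function.update S i S')) ∧
        Btw3 (S i).hi (eprHi q S) (eprHi q (Function.update S i S'))) ∧
      Strategyproof (fun S : Fin n → OInt => eprI p q S) :=
  ⟨fun S i S' => ⟨btw3_eprLo_update hp (by omega) S i S', btw3_eprHi_update hq (by omega) S i S'⟩,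
    (outBetween_eprI hp hq hpq).strategyproof⟩
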